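/- arXiv:1106.4946 — 2 statements merged into one kernel-verified Lean document; each statement's English description precedes it below -/
import Mathlib

section
/- For all functions F₁, F₂ from pairs of finite subsets of ℝ^d to ℝ and every pair (η⁺,η⁻) of finite subsets of ℝ^d, the ⋆-convolution of the inverse K-transforms equals the inverse K-transform of the pointwise product: ((𝕂⁻¹F₁) ⋆ (𝕂⁻¹F₂))(η⁺,η⁻) = (𝕂⁻¹(F₁·F₂))(η⁺,η⁻). -/
open MeasureTheory Finset ENNReal

noncomputable section

/-- Finite configurations over `ℝ^d`. -/
abbrev Cfg (d : ℕ) := Finset (Fin d → ℝ)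

/-- Two-component `K`-transform. -/
def Ktr {d : ℕ} (G : Cfg d → Cfg d → ℝ) (γp γm : Cfg d) : ℝ :=
  ∑ ηp ∈ γp.powerset, ∑ ηm ∈ γm.powerset, G ηp ηm

/-- Two-component inverse `K`-transform. -/
def Kinv {d : ℕ} (F : Cfg d → Cfg d → ℝ) (ηp ηm : Cfg d) : ℝ :=
  ∑ ξp ∈ ηp.powerset, ∑ ξm ∈ ηm.powerset,
    (-1 : ℝ) ^ ((ηp \ ξp).card + (ηm \ ξm).card) * F ξp ξm

/-- The `⋆`-convolution. -/
def starConv {d : ℕ} (G₁ G₂ : Cfg d → Cfg d → ℝ) (ηp ηm : Cfg d) : ℝ :=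
  ∑ ξp ∈ ηp.powerset, ∑ ξm ∈ ηm.powerset, G₁ ξp ξm *
    ∑ ζp ∈ ξp.powerset, ∑ ζm ∈ ξm.powerset, G₂ ((ηp \ ξp) ∪ ζp) ((ηm \ ξm) ∪ ζm)

/-- The configuration `{x₁,…,xₙ}` associated with a tuple `(x₁,…,xₙ)`. -/
def toCfg {d n : ℕ} (x : Fin n → Fin d → ℝ) : Cfg d := Finset.image x Finset.univ

/-- Two-component Lebesgue–Poisson integral, real-valued version. -/
def lpInt2 {d : ℕ} (F : Cfg d → Cfg d → ℝ) : ℝ :=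
  ∑' (n : ℕ) (m : ℕ), (1 / ((Nat.factorial n : ℝ) * (Nat.factorial m : ℝ))) *
    ∫ x : Fin n → Fin d → ℝ, ∫ y : Fin m → Fin d → ℝ, F (toCfg x) (toCfg y)

/-- Two-component Lebesgue–Poisson integral, `ℝ≥0∞`-valued version. -/
def lpInt2nn {d : ℕ} (F : Cfg d → Cfg d → ℝ≥0∞) : ℝ≥0∞ :=
  ∑' (n : ℕ) (m : ℕ), ((Nat.factorial n * Nat.factorial m : ℕ) : ℝ≥0∞)⁻¹ *
    ∫⁻ x : Fin n → Fin d → ℝ, ∫⁻ y : Fin m → Fin d → ℝ, F (toCfg x) (toCfg y)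

/-- `L_C`-norm of a real-valued function on two-component finite configurations. -/
def normLC {d : ℕ} (C : ℝ) (F : Cfg d → Cfg d → ℝ) : ℝ≥0∞ :=
  lpInt2nn (fun ηp ηm => ENNReal.ofReal (|F ηp ηm| * C ^ (ηp.card + ηm.card)))

/-- `L_C`-norm of an `ℝ≥0∞`-valued function on two-component finite configurations. -/
def normLCnn {d : ℕ} (C : ℝ) (F : Cfg d → Cfg d → ℝ≥0∞) : ℝ≥0∞ :=
  lpInt2nn (fun ηp ηm => F ηp ηm * ENNReal.ofReal (C ^ (ηp.card + ηm.card)))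

/-- Inverse `K`-transform of a shifted one-point rate, e.g. `D±`, `B±`, `A±`. -/
def kerK {d : ℕ} (r : (Fin d → ℝ) → Cfg d → Cfg d → ℝ)
    (x : Fin d → ℝ) (ξp ξm ηp ηm : Cfg d) : ℝ :=
  ∑ ζp ∈ ηp.powerset, ∑ ζm ∈ ηm.powerset,
    (-1 : ℝ) ^ ((ηp \ ζp).card + (ηm \ ζm).card) * r x (ζp ∪ ξp) (ζm ∪ ξm)

/-- Inverse `K`-transform of a shifted two-point rate, e.g. `C₁±`, `C₂±`. -/
def kerK2 {d : ℕ} (c : (Fin d → ℝ) → (Fin d → ℝ) → Cfg d → Cfg d → ℝ)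
    (x y : Fin d → ℝ) (ξp ξm ηp ηm : Cfg d) : ℝ :=
  ∑ ζp ∈ ηp.powerset, ∑ ζm ∈ ηm.powerset,
    (-1 : ℝ) ^ ((ηp \ ζp).card + (ηm \ ζm).card) * c x y (ζp ∪ ξp) (ζm ∪ ξm)

/-- A function of pairs of finite configurations has bounded support. -/
def BddSupp {d : ℕ} (G : Cfg d → Cfg d → ℝ) : Prop :=
  ∃ (Λ : Set (Fin d → ℝ)) (N : ℕ), IsCompact Λ ∧
    ∀ ηp ηm : Cfg d,
      ¬((↑ηp : Set (Fin d → ℝ)) ⊆ Λ ∧ (↑ηm : Set (Fin d → ℝ)) ⊆ Λ ∧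
        ηp.card ≤ N ∧ ηm.card ≤ N) → G ηp ηm = 0

/-- A function of pairs of finite configurations is bounded. -/
def Bdd {d : ℕ} (G : Cfg d → Cfg d → ℝ) : Prop :=
  ∃ Cb : ℝ, ∀ ηp ηm : Cfg d, |G ηp ηm| ≤ Cb

/-- Two-component birth-and-death generator. -/
def LBD {d : ℕ} (dp dm bp bm : (Fin d → ℝ) → Cfg d → Cfg d → ℝ)
    (F : Cfg d → Cfg d → ℝ) (γp γm : Cfg d) : ℝ :=
  (∑ x ∈ γp, dp x (γp.erase x) γm * (F (γp.erase x) γm - F γp γm))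
  + (∫ x, bp x γp γm * (F (insert x γp) γm - F γp γm))
  + (∑ y ∈ γm, dm y γp (γm.erase y) * (F γp (γm.erase y) - F γp γm))
  + (∫ y, bm y γp γm * (F γp (insert y γm) - F γp γm))

/-- Hierarchical birth-and-death operator `L̂`. -/
def hatLBD {d : ℕ} (dp dm bp bm : (Fin d → ℝ) → Cfg d → Cfg d → ℝ)
    (G : Cfg d → Cfg d → ℝ) (ηp ηm : Cfg d) : ℝ :=
  -(∑ ξp ∈ ηp.powerset, ∑ ξm ∈ ηm.powerset, G ξp ξm *
      ((∑ x ∈ ξp, kerK dp x (ξp.erase x) ξm (ηp \ ξp) (ηm \ ξm))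
       + ∑ y ∈ ξm, kerK dm y ξp (ξm.erase y) (ηp \ ξp) (ηm \ ξm)))
  + ∑ ξp ∈ ηp.powerset, ∑ ξm ∈ ηm.powerset,
      ((∫ x, G (insert x ξp) ξm * kerK bp x ξp ξm (ηp \ ξp) (ηm \ ξm))
       + ∫ y, G ξp (insert y ξm) * kerK bm y ξp ξm (ηp \ ξp) (ηm \ ξm))

/-- Adjoint birth-and-death operator `L̂*`. -/
def hatLBDstar {d : ℕ} (dp dm bp bm : (Fin d → ℝ) → Cfg d → Cfg d → ℝ)
    (k : Cfg d → Cfg d → ℝ) (ηp ηm : Cfg d) : ℝ :=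
  -(∑ x ∈ ηp, lpInt2 (fun ξp ξm =>
      k (ηp ∪ ξp) (ηm ∪ ξm) * kerK dp x (ηp.erase x) ηm ξp ξm))
  + (∑ x ∈ ηp, lpInt2 (fun ξp ξm =>
      k ((ηp.erase x) ∪ ξp) (ηm ∪ ξm) * kerK bp x (ηp.erase x) ηm ξp ξm))
  - (∑ y ∈ ηm, lpInt2 (fun ξp ξm =>
      k (ηp ∪ ξp) (ηm ∪ ξm) * kerK dm y ηp (ηm.erase y) ξp ξm))
  + (∑ y ∈ ηm, lpInt2 (fun ξp ξm =>
      k (ηp ∪ ξp) ((ηm.erase y) ∪ ξm) * kerK bm y ηp (ηm.erase y) ξp ξm))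

/-- Mark-preserving hopping generator `L₁`. -/
def Lhop1 {d : ℕ} (c1p c1m : (Fin d → ℝ) → (Fin d → ℝ) → Cfg d → Cfg d → ℝ)
    (F : Cfg d → Cfg d → ℝ) (γp γm : Cfg d) : ℝ :=
  (∑ x ∈ γp, ∫ x', c1p x x' (γp.erase x) γm *
      (F (insert x' (γp.erase x)) γm - F γp γm))
  + (∑ y ∈ γm, ∫ y', c1m y y' γp (γm.erase y) *
      (F γp (insert y' (γm.erase y)) - F γp γm))

/-- Mark-flipping hopping generator `L₂`. -/
def Lhop2 {d : ℕ} (c2p c2m : (Fin d → ℝ) → (Fin d → ℝ) → Cfg d → Cfg d → ℝ)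
    (F : Cfg d → Cfg d → ℝ) (γp γm : Cfg d) : ℝ :=
  (∑ x ∈ γp, ∫ y, c2p x y (γp.erase x) γm *
      (F (γp.erase x) (insert y γm) - F γp γm))
  + (∑ y ∈ γm, ∫ x, c2m x y γp (γm.erase y) *
      (F (insert x γp) (γm.erase y) - F γp γm))

/-- Hierarchical mark-preserving hopping operator `L̂₁`. -/
def hatL1 {d : ℕ} (c1p c1m : (Fin d → ℝ) → (Fin d → ℝ) → Cfg d → Cfg d → ℝ)
    (G : Cfg d → Cfg d → ℝ) (ηp ηm : Cfg d) : ℝ :=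
  (∑ ξp ∈ ηp.powerset, ∑ ξm ∈ ηm.powerset, ∑ x ∈ ξp, ∫ x',
      (G (insert x' (ξp.erase x)) ξm - G ξp ξm) *
        kerK2 c1p x x' (ξp.erase x) ξm (ηp \ ξp) (ηm \ ξm))
  + (∑ ξp ∈ ηp.powerset, ∑ ξm ∈ ηm.powerset, ∑ y ∈ ξm, ∫ y',
      (G ξp (insert y' (ξm.erase y)) - G ξp ξm) *
        kerK2 c1m y y' ξp (ξm.erase y) (ηp \ ξp) (ηm \ ξm))

/-- Hierarchical mark-flipping hopping operator `L̂₂`. -/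
def hatL2 {d : ℕ} (c2p c2m : (Fin d → ℝ) → (Fin d → ℝ) → Cfg d → Cfg d → ℝ)
    (G : Cfg d → Cfg d → ℝ) (ηp ηm : Cfg d) : ℝ :=
  (∑ ξp ∈ ηp.powerset, ∑ ξm ∈ ηm.powerset, ∑ x ∈ ξp, ∫ y,
      (G (ξp.erase x) (insert y ξm) - G ξp ξm) *
        kerK2 c2p x y (ξp.erase x) ξm (ηp \ ξp) (ηm \ ξm))
  + (∑ ξp ∈ ηp.powerset, ∑ ξm ∈ ηm.powerset, ∑ y ∈ ξm, ∫ x,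
      (G (insert x ξp) (ξm.erase y) - G ξp ξm) *
        kerK2 c2m x y ξp (ξm.erase y) (ηp \ ξp) (ηm \ ξm))

/-- Adjoint mark-preserving hopping operator `L̂₁*`. -/
def hatL1star {d : ℕ} (c1p c1m : (Fin d → ℝ) → (Fin d → ℝ) → Cfg d → Cfg d → ℝ)
    (k : Cfg d → Cfg d → ℝ) (ηp ηm : Cfg d) : ℝ :=
  (∑ x ∈ ηp, lpInt2 (fun ξp ξm => ∫ x',
      k ((ξp ∪ ηp ∪ {x'}).erase x) (ξm ∪ ηm) * kerK2 c1p x' x (ηp.erase x) ηm ξp ξm))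
  - (∑ x ∈ ηp, lpInt2 (fun ξp ξm =>
      k (ξp ∪ ηp) (ξm ∪ ηm) * ∫ x', kerK2 c1p x x' (ηp.erase x) ηm ξp ξm))
  + (∑ y ∈ ηm, lpInt2 (fun ξp ξm => ∫ y',
      k (ξp ∪ ηp) ((ξm ∪ ηm ∪ {y'}).erase y) * kerK2 c1m y' y ηp (ηm.erase y) ξp ξm))
  - (∑ y ∈ ηm, lpInt2 (fun ξp ξm =>
      k (ξp ∪ ηp) (ξm ∪ ηm) * ∫ y', kerK2 c1m y y' ηp (ηm.erase y) ξp ξm))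

/-- Adjoint mark-flipping hopping operator `L̂₂*`. -/
def hatL2star {d : ℕ} (c2p c2m : (Fin d → ℝ) → (Fin d → ℝ) → Cfg d → Cfg d → ℝ)
    (k : Cfg d → Cfg d → ℝ) (ηp ηm : Cfg d) : ℝ :=
  (∑ y ∈ ηm, lpInt2 (fun ξp ξm => ∫ x,
      k (ξp ∪ ηp ∪ {x}) ((ξm ∪ ηm).erase y) * kerK2 c2p x y ηp (ηm.erase y) ξp ξm))
  - (∑ x ∈ ηp, lpInt2 (fun ξp ξm =>
      k (ξp ∪ ηp) (ξm ∪ ηm) * ∫ y, kerK2 c2p x y (ηp.erase x) ηm ξp ξm))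
  + (∑ x ∈ ηp, lpInt2 (fun ξp ξm => ∫ y,
      k ((ξp ∪ ηp).erase x) (ξm ∪ ηm ∪ {y}) * kerK2 c2m x y (ηp.erase x) ηm ξp ξm))
  - (∑ y ∈ ηm, lpInt2 (fun ξp ξm =>
      k (ξp ∪ ηp) (ξm ∪ ηm) * ∫ x, kerK2 c2m x y ηp (ηm.erase y) ξp ξm))

/-- Flipping generator `L₀`. -/
def Lflip {d : ℕ} (ap am : (Fin d → ℝ) → Cfg d → Cfg d → ℝ)
    (F : Cfg d → Cfg d → ℝ) (γp γm : Cfg d) : ℝ :=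
  (∑ x ∈ γp, ap x (γp.erase x) γm * (F (γp.erase x) (insert x γm) - F γp γm))
  + (∑ y ∈ γm, am y γp (γm.erase y) * (F (insert y γp) (γm.erase y) - F γp γm))

/-!
Möbius inversion on the Boolean lattice of finite subsets, which rests on
`∑_{μ ⊆ A} (-1)^|μ| = [A = ∅]`, shows that `Kinv` is a two-sided inverse of the `K`-transform
`Ktr`. Reindexing the triple sum of `Ktr (G₁ ⋆ G₂)` by `η = ξ ∪ μ` with `μ ⊆ γ \ ξ`, and merging
the independent choices `μ ⊆ γ \ ξ`, `ζ ⊆ ξ` into one subset `μ ∪ ζ ⊆ γ`, gives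
`Ktr (G₁ ⋆ G₂) = Ktr G₁ * Ktr G₂`. Hence
`Kinv F₁ ⋆ Kinv F₂ = Kinv (Ktr (Kinv F₁) * Ktr (Kinv F₂)) = Kinv (F₁ * F₂)`.
A pair of configurations `(ηp, ηm)` is treated as the single finite set `ηp.disjSum ηm`,
so that it suffices to do all of this for one component.
-/

namespace Finset

section Powerset

variable {α M R : Type*} [DecidableEq α]

theorem union_sdiff_cancel_of_subset_sdiff {ξ μ γ : Finset α} (hμ : μ ⊆ γ \ ξ) :
    (ξ ∪ μ) \ ξ = μ :=
  union_sdiff_cancel_left (disjoint_of_subset_right hμ disjoint_sdiff)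

variable [AddCommMonoid M]

theorem sum_powerset_sum_powerset (γ : Finset α) (f : Finset α → Finset α → M) :
    ∑ s ∈ γ.powerset, ∑ t ∈ s.powerset, f s t =
      ∑ t ∈ γ.powerset, ∑ u ∈ (γ \ t).powerset, f (t ∪ u) t := by
  rw [sum_comm' (t' := γ.powerset) (s' := fun t => Icc t γ) (by simp; tauto)]
  refine sum_congr rfl fun t ht => ?_
  rw [Icc_eq_image_powerset (mem_powerset.1 ht), sum_image]
  intro u hu v hv huv
  simp only [coe_powerset, Set.mem_preimage, Set.mem_powerset_iff, coe_subset] at hu hv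
  simpa [union_sdiff_cancel_of_subset_sdiff hu, union_sdiff_cancel_of_subset_sdiff hv]
    using congrArg (· \ t) huv

theorem sum_powerset_sum_powerset_union {s t : Finset α} (hst : Disjoint s t)
    (g : Finset α → M) :
    ∑ x ∈ s.powerset, ∑ y ∈ t.powerset, g (x ∪ y) = ∑ u ∈ (s ∪ t).powerset, g u := by
  rw [← sum_product']
  refine sum_nbij' (fun p => p.1 ∪ p.2) (fun u => (u ∩ s, u ∩ t)) ?_ ?_ ?_ ?_ fun _ _ => rfl
  · simp only [mem_product, mem_powerset]
    exact fun p hp => union_subset_union hp.1 hp.2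
  · simp
  · simp only [mem_product, mem_powerset]
    rintro ⟨x, y⟩ ⟨hx, hy⟩
    have hxt := disjoint_iff_inter_eq_empty.1 (disjoint_of_subset_left hx hst)
    have hys := disjoint_iff_inter_eq_empty.1 (disjoint_of_subset_left hy hst.symm)
    simp only [union_inter_distrib_right, inter_eq_left.2 hx, inter_eq_left.2 hy, hxt, hys,
      union_empty, empty_union]
  · simp only [mem_powerset]
    intro u hu
    rw [← inter_union_distrib_left, inter_eq_left.2 hu]

theorem sum_powerset_ite_sdiff_eq_empty (γ : Finset α) (f : Finset α → M) :
    ∑ ξ ∈ γ.powerset, (if γ \ ξ = ∅ then f ξ else 0) = f γ := by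
  rw [sum_eq_single_of_mem γ (mem_powerset_self γ) fun ξ hξ hne => if_neg ?_, sdiff_self,
    bot_eq_empty, if_pos rfl]
  rw [sdiff_eq_empty_iff_subset]
  exact fun h => hne ((mem_powerset.1 hξ).antisymm h)

variable [Ring R]

theorem sum_powerset_neg_one_pow_card_eq_ite (s : Finset α) :
    ∑ t ∈ s.powerset, (-1 : R) ^ #t = if s = ∅ then 1 else 0 := by
  have h := congrArg (Int.cast : ℤ → R) (sum_powerset_neg_one_pow_card (x := s))
  push_cast at h
  exact h

theorem sum_powerset_neg_one_pow_card_sdiff (s : Finset α) :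
    ∑ t ∈ s.powerset, (-1 : R) ^ #(s \ t) = if s = ∅ then 1 else 0 := by
  rw [← sum_powerset_neg_one_pow_card_eq_ite]
  refine sum_nbij' (s \ ·) (s \ ·) ?_ ?_ ?_ ?_ ?_ <;> simp +contextual

end Powerset

section DisjSum

variable {α β M : Type*}

theorem sum_powerset_disjSum [AddCommMonoid M] (s : Finset α) (t : Finset β)
    (f : Finset (α ⊕ β) → M) :
    ∑ u ∈ (s.disjSum t).powerset, f u = ∑ x ∈ s.powerset, ∑ y ∈ t.powerset, f (x.disjSum y) := by
  rw [← sum_product']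
  refine sum_nbij' (fun u => (u.toLeft, u.toRight)) (fun p => p.1.disjSum p.2)
    ?_ ?_ ?_ ?_ ?_ <;> simp +contextual [subset_disjSum, toLeft_disjSum_toRight]

variable [DecidableEq α] [DecidableEq β]

theorem disjSum_sdiff_disjSum (s s' : Finset α) (t t' : Finset β) :
    s.disjSum t \ s'.disjSum t' = (s \ s').disjSum (t \ t') := by
  ext (a | b) <;> simp

theorem disjSum_union_disjSum (s s' : Finset α) (t t' : Finset β) :
    s.disjSum t ∪ s'.disjSum t' = (s ∪ s').disjSum (t ∪ t') := by
  ext (a | b) <;> simp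

end DisjSum

end Finset

section OneComponent

variable {α R : Type*} [DecidableEq α]

def Ktr₁ [AddCommMonoid R] (g : Finset α → R) (γ : Finset α) : R := ∑ η ∈ γ.powerset, g η

def Kinv₁ [Ring R] (f : Finset α → R) (η : Finset α) : R :=
  ∑ ξ ∈ η.powerset, (-1) ^ #(η \ ξ) * f ξ

def starConv₁ [NonUnitalNonAssocSemiring R] (g₁ g₂ : Finset α → R) (η : Finset α) : R :=
  ∑ ξ ∈ η.powerset, g₁ ξ * ∑ ζ ∈ ξ.powerset, g₂ ((η \ ξ) ∪ ζ)

theorem Ktr₁_starConv₁ [NonUnitalNonAssocSemiring R] (g₁ g₂ : Finset α → R) :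
    Ktr₁ (starConv₁ g₁ g₂) = Ktr₁ g₁ * Ktr₁ g₂ := by
  funext γ
  calc Ktr₁ (starConv₁ g₁ g₂) γ
      = ∑ ξ ∈ γ.powerset, g₁ ξ * ∑ μ ∈ (γ \ ξ).powerset, ∑ ζ ∈ ξ.powerset, g₂ (μ ∪ ζ) := by
        simp only [Ktr₁, starConv₁]
        rw [sum_powerset_sum_powerset]
        refine sum_congr rfl fun ξ _ => ?_
        rw [mul_sum]
        exact sum_congr rfl fun μ hμ => by
          rw [union_sdiff_cancel_of_subset_sdiff (mem_powerset.1 hμ)]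
    _ = ∑ ξ ∈ γ.powerset, g₁ ξ * Ktr₁ g₂ γ := by
        refine sum_congr rfl fun ξ hξ => ?_
        rw [sum_powerset_sum_powerset_union sdiff_disjoint,
          sdiff_union_of_subset (mem_powerset.1 hξ), Ktr₁]
    _ = (Ktr₁ g₁ * Ktr₁ g₂) γ := by simp only [Pi.mul_apply, Ktr₁, sum_mul]

variable [Ring R]

theorem Ktr₁_Kinv₁ (f : Finset α → R) : Ktr₁ (Kinv₁ f) = f := by
  funext γ
  calc Ktr₁ (Kinv₁ f) γ = ∑ ξ ∈ γ.powerset, (∑ μ ∈ (γ \ ξ).powerset, (-1) ^ #μ) * f ξ := by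
        simp only [Ktr₁, Kinv₁, sum_powerset_sum_powerset, sum_mul]
        exact sum_congr rfl fun ξ _ => sum_congr rfl fun μ hμ => by
          rw [union_sdiff_cancel_of_subset_sdiff (mem_powerset.1 hμ)]
    _ = f γ := by
        simp only [sum_powerset_neg_one_pow_card_eq_ite, ite_mul, one_mul, zero_mul,
          sum_powerset_ite_sdiff_eq_empty]

theorem Kinv₁_Ktr₁ (g : Finset α → R) : Kinv₁ (Ktr₁ g) = g := by
  funext γ
  calc Kinv₁ (Ktr₁ g) γ
      = ∑ ζ ∈ γ.powerset, (∑ μ ∈ (γ \ ζ).powerset, (-1) ^ #((γ \ ζ) \ μ)) * g ζ := by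
        simp only [Kinv₁, Ktr₁, mul_sum, sum_powerset_sum_powerset, sum_mul, sdiff_sdiff_left,
          sup_eq_union]
    _ = g γ := by
        simp only [sum_powerset_neg_one_pow_card_sdiff, ite_mul, one_mul, zero_mul,
          sum_powerset_ite_sdiff_eq_empty]

theorem starConv₁_Kinv₁ (f₁ f₂ : Finset α → R) :
    starConv₁ (Kinv₁ f₁) (Kinv₁ f₂) = Kinv₁ (f₁ * f₂) := by
  rw [← Kinv₁_Ktr₁ (starConv₁ _ _), Ktr₁_starConv₁, Ktr₁_Kinv₁, Ktr₁_Kinv₁]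

end OneComponent

section TwoComponent

def sumUncurry {α β R : Type*} (G : Finset α → Finset β → R) (u : Finset (α ⊕ β)) : R :=
  G u.toLeft u.toRight

variable {d : ℕ}

theorem Kinv_eq_Kinv₁ (F : Cfg d → Cfg d → ℝ) (ηp ηm : Cfg d) :
    Kinv F ηp ηm = Kinv₁ (sumUncurry F) (ηp.disjSum ηm) := by
  simp [Kinv, Kinv₁, sum_powerset_disjSum, disjSum_sdiff_disjSum, sumUncurry]

theorem sumUncurry_Kinv (F : Cfg d → Cfg d → ℝ) :
    sumUncurry (Kinv F) = Kinv₁ (sumUncurry F) := by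
  funext u
  rw [sumUncurry, Kinv_eq_Kinv₁, toLeft_disjSum_toRight]

theorem starConv_eq_starConv₁ (G₁ G₂ : Cfg d → Cfg d → ℝ) (ηp ηm : Cfg d) :
    starConv G₁ G₂ ηp ηm = starConv₁ (sumUncurry G₁) (sumUncurry G₂) (ηp.disjSum ηm) := by
  simp [starConv, starConv₁, sum_powerset_disjSum, disjSum_sdiff_disjSum,
    disjSum_union_disjSum, sumUncurry]

end TwoComponent

/-- the `⋆`-convolution of inverse `𝕂`-transforms is the inverse
`𝕂`-transform of the pointwise product. -/
theorem starConv_Kinv {d : ℕ} (F₁ F₂ : Cfg d → Cfg d → ℝ) (ηp ηm : Cfg d) :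
    starConv (Kinv F₁) (Kinv F₂) ηp ηm
      = Kinv (fun ζp ζm => F₁ ζp ζm * F₂ ζp ζm) ηp ηm := by
  rw [starConv_eq_starConv₁, sumUncurry_Kinv, sumUncurry_Kinv, starConv₁_Kinv₁,
    Kinv_eq_Kinv₁]
  rfl
end
end

section
/- The ⋆-convolution makes the real-valued functions of pairs of finite subsets of ℝ^d into a commutative, associative algebra with unit: for all such functions G₁, G₂, G₃ and all pairs (η⁺,η⁻) of finite subsets, (i) (G₁⋆G₂)(η⁺,η⁻) equals the partition form ∑ G₁(η₁⁺∪η₂⁺, η₁⁻∪η₂⁻)·G₂(η₂⁺∪η₃⁺, η₂⁻∪η₃⁻), where the sum runs over all ordered decompositions of η⁺ into three pairwise disjoint (possibly empty) parts (η₁⁺,η₂⁺,η₃⁺) with union η⁺ and likewise of η⁻ into (η₁⁻,η₂⁻,η₃⁻); (ii) G₁⋆G₂ = G₂⋆G₁; (iii) (G₁⋆G₂)⋆G₃ = G₁⋆(G₂⋆G₃); and (iv) G₁⋆e = G₁, where e(η⁺,η⁻) = 1 if η⁺ = ∅ and η⁻ = ∅, and e(η⁺,η⁻) = 0 otherwise.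 -/
/-!
Writing `ζ ⊆ ξ ⊆ η` as the decomposition `(ξ \ ζ, ζ, η \ ξ)` of `η` turns the definition of `⋆`
into its partition form. Summing the partition form over `η ⊆ γ`, a decomposition `(a, b, c)`
of a subset of `γ` is the same as the pair `(a ∪ b, b ∪ c)` of subsets of `γ` (with inverse
`(A, B) ↦ (A \ B, A ∩ B, B \ A)`), so the two-component K-transform turns `⋆` into the
pointwise product: `K (G₁ ⋆ G₂) = K G₁ · K G₂`, and `K e = 1`. Since `K` is injective (peel off
the top term `η` of `∑_{ξ ⊆ η}` and induct), commutativity, associativity and the unit law of `⋆`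
are inherited from the pointwise product.
-/

open MeasureTheory Finset ENNReal

noncomputable section

namespace Finset

variable {α : Type*} [DecidableEq α]

def tripleDecompositions (η : Finset α) : Finset (Finset α × Finset α × Finset α) :=
  (η.powerset ×ˢ η.powerset ×ˢ η.powerset).filter
    (fun t => Disjoint t.1 t.2.1 ∧ Disjoint t.1 t.2.2 ∧ Disjoint t.2.1 t.2.2 ∧
      t.1 ∪ t.2.1 ∪ t.2.2 = η)

theorem mem_tripleDecompositions {η a b c : Finset α} :
    (a, b, c) ∈ η.tripleDecompositions ↔
      Disjoint a b ∧ Disjoint a c ∧ Disjoint b c ∧ a ∪ b ∪ c = η := by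
  simp only [tripleDecompositions, mem_filter, mem_product, mem_powerset, and_iff_right_iff_imp]
  rintro ⟨-, -, -, rfl⟩
  grind

section
variable {M : Type*} [AddCommMonoid M]

theorem sum_powerset_sum_powerset_eq_sum_tripleDecompositions (η : Finset α)
    (g : Finset α → Finset α → M) :
    ∑ ξ ∈ η.powerset, ∑ ζ ∈ ξ.powerset, g ξ (η \ ξ ∪ ζ)
      = ∑ t ∈ η.tripleDecompositions, g (t.1 ∪ t.2.1) (t.2.1 ∪ t.2.2) := by
  rw [sum_sigma']
  refine sum_nbij' (fun x => (x.1 \ x.2, x.2, η \ x.1)) (fun t => ⟨t.1 ∪ t.2.1, t.2.1⟩)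
    ?_ ?_ ?_ ?_ ?summand
  case summand =>
    rintro ⟨ξ, ζ⟩ hξζ
    rw [mem_sigma, mem_powerset, mem_powerset] at hξζ
    rw [sdiff_union_of_subset hξζ.2, union_comm]
  all_goals
    simp only [Sigma.forall, Prod.forall, mem_sigma, mem_powerset, mem_tripleDecompositions,
      Sigma.mk.injEq, heq_eq_eq, Prod.mk.injEq]
    grind [Finset.disjoint_left]

theorem sum_powerset_sum_tripleDecompositions (γ : Finset α) (g : Finset α → Finset α → M) :
    ∑ η ∈ γ.powerset, ∑ t ∈ η.tripleDecompositions, g (t.1 ∪ t.2.1) (t.2.1 ∪ t.2.2)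
      = ∑ A ∈ γ.powerset, ∑ B ∈ γ.powerset, g A B := by
  rw [sum_sigma', ← sum_product']
  refine sum_nbij' (fun x => (x.2.1 ∪ x.2.2.1, x.2.2.1 ∪ x.2.2.2))
    (fun p => ⟨p.1 ∪ p.2, (p.1 \ p.2, p.1 ∩ p.2, p.2 \ p.1)⟩) ?_ ?_ ?_ ?_ ?_
  all_goals
    simp only [Sigma.forall, Prod.forall, mem_sigma, mem_product, mem_powerset,
      mem_tripleDecompositions, Sigma.mk.injEq, heq_eq_eq, Prod.mk.injEq]
    grind [Finset.disjoint_left]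

end

theorem sum_powerset_injective {M : Type*} [AddCancelCommMonoid M] :
    Function.Injective fun (f : Finset α → M) (s : Finset α) => ∑ t ∈ s.powerset, f t := by
  intro f g hfg
  funext s
  induction s using Finset.strongInduction with
  | H s ih =>
    have hs : ∑ t ∈ s.powerset, f t = ∑ t ∈ s.powerset, g t := congrFun hfg s
    rw [← add_sum_erase _ _ (mem_powerset_self s), ← add_sum_erase _ _ (mem_powerset_self s),
      sum_congr rfl fun t ht => ih t ?_] at hs
    · exact add_right_cancel hs
    · obtain ⟨hts, ht⟩ := mem_erase.1 ht
      exact (mem_powerset.1 ht).ssubset_of_ne hts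

end Finset

variable {d : ℕ}

theorem Ktr_injective : Function.Injective (Ktr (d := d)) := by
  intro F₁ F₂ h
  have hm : (fun ξp (b : Cfg d) => ∑ ξm ∈ b.powerset, F₁ ξp ξm) =
      fun ξp b => ∑ ξm ∈ b.powerset, F₂ ξp ξm :=
    sum_powerset_injective <| funext fun a => funext fun b => by
      simpa only [Ktr, Finset.sum_apply] using congrFun (congrFun h a) b
  funext ξp
  exact sum_powerset_injective (congrFun hm ξp)

theorem starConv_eq_sum_tripleDecompositions (G₁ G₂ : Cfg d → Cfg d → ℝ) (ηp ηm : Cfg d) :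
    starConv G₁ G₂ ηp ηm =
      ∑ p ∈ ηp.tripleDecompositions, ∑ q ∈ ηm.tripleDecompositions,
        G₁ (p.1 ∪ p.2.1) (q.1 ∪ q.2.1) * G₂ (p.2.1 ∪ p.2.2) (q.2.1 ∪ q.2.2) := calc
  starConv G₁ G₂ ηp ηm = ∑ ξp ∈ ηp.powerset, ∑ ζp ∈ ξp.powerset, ∑ q ∈ ηm.tripleDecompositions,
      G₁ ξp (q.1 ∪ q.2.1) * G₂ (ηp \ ξp ∪ ζp) (q.2.1 ∪ q.2.2) := by
    simp only [starConv, mul_sum]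
    refine sum_congr rfl fun ξp _ => ?_
    rw [sum_comm]
    exact sum_congr rfl fun ζp _ => sum_powerset_sum_powerset_eq_sum_tripleDecompositions ηm
      fun A B => G₁ ξp A * G₂ (ηp \ ξp ∪ ζp) B
  _ = _ := sum_powerset_sum_powerset_eq_sum_tripleDecompositions ηp fun A B =>
      ∑ q ∈ ηm.tripleDecompositions, G₁ A (q.1 ∪ q.2.1) * G₂ B (q.2.1 ∪ q.2.2)

theorem Ktr_starConv (G₁ G₂ : Cfg d → Cfg d → ℝ) (γp γm : Cfg d) :
    Ktr (starConv G₁ G₂) γp γm = Ktr G₁ γp γm * Ktr G₂ γp γm := calc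
  Ktr (starConv G₁ G₂) γp γm = ∑ ηp ∈ γp.powerset, ∑ p ∈ ηp.tripleDecompositions,
      ∑ ηm ∈ γm.powerset, ∑ q ∈ ηm.tripleDecompositions,
        G₁ (p.1 ∪ p.2.1) (q.1 ∪ q.2.1) * G₂ (p.2.1 ∪ p.2.2) (q.2.1 ∪ q.2.2) := by
    simp only [Ktr, starConv_eq_sum_tripleDecompositions]
    exact sum_congr rfl fun ηp _ => sum_comm
  _ = ∑ ηp ∈ γp.powerset, ∑ p ∈ ηp.tripleDecompositions, ∑ Am ∈ γm.powerset,
      ∑ Bm ∈ γm.powerset, G₁ (p.1 ∪ p.2.1) Am * G₂ (p.2.1 ∪ p.2.2) Bm :=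
    sum_congr rfl fun _ _ => sum_congr rfl fun p _ => sum_powerset_sum_tripleDecompositions γm
      fun A B => G₁ (p.1 ∪ p.2.1) A * G₂ (p.2.1 ∪ p.2.2) B
  _ = ∑ Ap ∈ γp.powerset, ∑ Bp ∈ γp.powerset, ∑ Am ∈ γm.powerset, ∑ Bm ∈ γm.powerset,
      G₁ Ap Am * G₂ Bp Bm := sum_powerset_sum_tripleDecompositions γp fun A B =>
        ∑ Am ∈ γm.powerset, ∑ Bm ∈ γm.powerset, G₁ A Am * G₂ B Bm
  _ = Ktr G₁ γp γm * Ktr G₂ γp γm := by simp only [Ktr, sum_mul_sum]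

theorem Ktr_starUnit (γp γm : Cfg d) :
    Ktr (fun a b => if a = ∅ ∧ b = ∅ then (1 : ℝ) else 0) γp γm = 1 := by
  simp [Ktr, ite_and]

theorem starConv_comm (G₁ G₂ : Cfg d → Cfg d → ℝ) : starConv G₁ G₂ = starConv G₂ G₁ :=
  Ktr_injective <| funext₂ fun γp γm => by simp only [Ktr_starConv, mul_comm]

theorem starConv_assoc (G₁ G₂ G₃ : Cfg d → Cfg d → ℝ) :
    starConv (starConv G₁ G₂) G₃ = starConv G₁ (starConv G₂ G₃) :=
  Ktr_injective <| funext₂ fun γp γm => by simp only [Ktr_starConv, mul_assoc]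

theorem starConv_starUnit (G : Cfg d → Cfg d → ℝ) :
    starConv G (fun a b => if a = ∅ ∧ b = ∅ then (1 : ℝ) else 0) = G :=
  Ktr_injective <| funext₂ fun γp γm => by rw [Ktr_starConv, Ktr_starUnit, mul_one]

open Classical in
/-- the `⋆`-convolution: partition form, commutativity, associativity
and unit element. -/
theorem starConv_algebra {d : ℕ} (G₁ G₂ G₃ : Cfg d → Cfg d → ℝ) (ηp ηm : Cfg d) :
    (starConv G₁ G₂ ηp ηm =
      ∑ p ∈ (ηp.powerset ×ˢ ηp.powerset ×ˢ ηp.powerset).filter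
          (fun t => Disjoint t.1 t.2.1 ∧ Disjoint t.1 t.2.2 ∧ Disjoint t.2.1 t.2.2 ∧
            t.1 ∪ t.2.1 ∪ t.2.2 = ηp),
        ∑ q ∈ (ηm.powerset ×ˢ ηm.powerset ×ˢ ηm.powerset).filter
          (fun t => Disjoint t.1 t.2.1 ∧ Disjoint t.1 t.2.2 ∧ Disjoint t.2.1 t.2.2 ∧
            t.1 ∪ t.2.1 ∪ t.2.2 = ηm),
          G₁ (p.1 ∪ p.2.1) (q.1 ∪ q.2.1) * G₂ (p.2.1 ∪ p.2.2) (q.2.1 ∪ q.2.2)) ∧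
    starConv G₁ G₂ ηp ηm = starConv G₂ G₁ ηp ηm ∧
    starConv (starConv G₁ G₂) G₃ ηp ηm = starConv G₁ (starConv G₂ G₃) ηp ηm ∧
    starConv G₁ (fun a b => if a = ∅ ∧ b = ∅ then (1 : ℝ) else 0) ηp ηm
      = G₁ ηp ηm :=
  ⟨starConv_eq_sum_tripleDecompositions G₁ G₂ ηp ηm, by rw [starConv_comm],
    by rw [starConv_assoc], by rw [starConv_starUnit]⟩
end
end
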